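/- arXiv:2505.06767 — 2 statements merged into one kernel-verified Lean document; each statement's English description precedes it below -/
import Mathlib

section
/- Let μ > 0, γ ∈ (0,1), n_h ∈ [0,1), n_c = 1 − n_h, and let r̄, p̄^h, p̄^c be as defined. Let f, g : ℕ → [0,∞) be probability mass functions on ℕ with Σ_{n≥0} n·f_n < ∞, Σ_{n≥0} n·g_n < ∞, Σ_{n≥0} f_n·|log f_n| < ∞, Σ_{n≥0} g_n·|log g_n| < ∞, and n_c·Σ_{n≥0} n·f_n + n_h·Σ_{n≥0} n·g_n = μ. Then H[(f,g)] ≤ H[(p̄^c, p̄^h)], i.e. the pair (p̄^c, p̄^h) maximizes the generalized entropy functional H over all such pairs. -/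
open Real

lemma geo_summable {r : ℝ} (hr0 : 0 ≤ r) (hr1 : r < 1) :
    Summable (fun n : ℕ => (1 - r) * r ^ n) :=
  (summable_geometric_of_lt_one hr0 hr1).mul_left _

lemma geo_sum {r : ℝ} (hr0 : 0 ≤ r) (hr1 : r < 1) :
    (∑' n : ℕ, (1 - r) * r ^ n) = 1 := by
  rw [tsum_mul_left, tsum_geometric_of_lt_one hr0 hr1]
  have : (1:ℝ) - r ≠ 0 := by linarith
  field_simp

lemma geo_mean_summable {r : ℝ} (hr0 : 0 ≤ r) (hr1 : r < 1) :
    Summable (fun n : ℕ => (n : ℝ) * ((1 - r) * r ^ n)) := by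
  have := (summable_pow_mul_geometric_of_norm_lt_one 1 (by rwa [Real.norm_eq_abs, abs_of_nonneg hr0] : ‖r‖ < 1)).mul_left (1 - r)
  refine this.congr fun n => by ring

lemma geo_mean {r : ℝ} (hr0 : 0 ≤ r) (hr1 : r < 1) :
    (∑' n : ℕ, (n : ℝ) * ((1 - r) * r ^ n)) = r / (1 - r) := by
  have hnorm : ‖r‖ < 1 := by rwa [Real.norm_eq_abs, abs_of_nonneg hr0]
  have h1 : (∑' n : ℕ, (n : ℝ) * ((1 - r) * r ^ n)) = (1 - r) * ∑' n : ℕ, (n : ℝ) * r ^ n := by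
    rw [← tsum_mul_left]; congr 1; funext n; ring
  rw [h1, tsum_coe_mul_geometric_of_norm_lt_one hnorm]
  have : (1 : ℝ) - r ≠ 0 := by linarith
  field_simp

lemma geo_ent {r : ℝ} (hr0 : 0 < r) (hr1 : r < 1) :
    (∑' n : ℕ, ((1 - r) * r ^ n) * Real.log ((1 - r) * r ^ n))
      = Real.log (1 - r) + (r / (1 - r)) * Real.log r := by
  have h1r : (0:ℝ) < 1 - r := by linarith
  have hlog : ∀ n : ℕ, ((1 - r) * r ^ n) * Real.log ((1 - r) * r ^ n)
      = Real.log (1 - r) * ((1 - r) * r ^ n) + Real.log r * ((n : ℝ) * ((1 - r) * r ^ n)) := by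
    intro n
    rw [Real.log_mul h1r.ne' (pow_ne_zero n hr0.ne'), Real.log_pow]
    ring
  rw [tsum_congr hlog, Summable.tsum_add ((geo_summable hr0.le hr1).mul_left _)
    ((geo_mean_summable hr0.le hr1).mul_left _)]
  · have e1 : (∑' n : ℕ, Real.log (1 - r) * ((1 - r) * r ^ n)) = Real.log (1 - r) := by
      rw [tsum_mul_left, geo_sum hr0.le hr1, mul_one]
    have e2 : (∑' n : ℕ, Real.log r * ((n : ℝ) * ((1 - r) * r ^ n)))
        = Real.log r * (r / (1 - r)) := by
      rw [tsum_mul_left, geo_mean hr0.le hr1]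
    rw [e1, e2]; ring

lemma gibbs {r : ℝ} (hr0 : 0 < r) (hr1 : r < 1) (f : ℕ → ℝ)
    (hf0 : ∀ n, 0 ≤ f n) (hf1 : (∑' n, f n) = 1)
    (hfm : Summable (fun n : ℕ => (n : ℝ) * f n))
    (hfl : Summable (fun n : ℕ => f n * |Real.log (f n)|)) :
    Real.log (1 - r) + Real.log r * (∑' n : ℕ, (n : ℝ) * f n)
      ≤ ∑' n : ℕ, f n * Real.log (f n) := by
  have h1r : (0:ℝ) < 1 - r := by linarith
  set q : ℕ → ℝ := fun n => (1 - r) * r ^ n with hq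
  have hqpos : ∀ n, 0 < q n := fun n => by positivity
  have hfs : Summable f := by
    by_contra h
    rw [tsum_eq_zero_of_not_summable h] at hf1; norm_num at hf1
  have hflog : Summable (fun n => f n * Real.log (f n)) := by
    refine Summable.of_abs ?_
    exact hfl.congr fun n => by rw [abs_mul, abs_of_nonneg (hf0 n)]
  have hfq : ∀ n : ℕ, f n * Real.log (q n)
      = Real.log (1 - r) * f n + Real.log r * ((n : ℝ) * f n) := by
    intro n
    rw [hq, Real.log_mul h1r.ne' (pow_ne_zero n hr0.ne'), Real.log_pow]
    ring
  have hfqs : Summable (fun n => f n * Real.log (q n)) := by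
    refine Summable.congr ((hfs.mul_left _).add (hfm.mul_left _)) fun n => (hfq n).symm
  have key : ∀ n, f n * Real.log (q n) - f n * Real.log (f n) ≤ q n - f n := by
    intro n
    rcases (hf0 n).eq_or_lt with h | h
    · simp [← h, (hqpos n).le]
    · have hd : 0 < q n / f n := div_pos (hqpos n) h
      have := Real.log_le_sub_one_of_pos hd
      rw [Real.log_div (hqpos n).ne' h.ne'] at this
      have h2 := mul_le_mul_of_nonneg_left this (hf0 n)
      calc f n * Real.log (q n) - f n * Real.log (f n)
          = f n * (Real.log (q n) - Real.log (f n)) := by ring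
        _ ≤ f n * (q n / f n - 1) := h2
        _ = q n - f n := by field_simp
  have hsum := Summable.tsum_le_tsum key (hfqs.sub hflog) ((geo_summable hr0.le hr1).sub hfs)
  rw [Summable.tsum_sub hfqs hflog, Summable.tsum_sub (geo_summable hr0.le hr1) hfs,
    geo_sum hr0.le hr1, hf1, sub_self] at hsum
  have hval : (∑' n, f n * Real.log (q n))
      = Real.log (1 - r) + Real.log r * (∑' n : ℕ, (n : ℝ) * f n) := by
    rw [tsum_congr hfq, Summable.tsum_add (hfs.mul_left _) (hfm.mul_left _),
      tsum_mul_left, tsum_mul_left, hf1, mul_one]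
  linarith [sub_nonpos.mp hsum]


/-- The equilibrium rate `r̄`. -/
noncomputable def rbar (μ γ nh : ℝ) : ℝ :=
  ((2 - γ) * μ + (1 - γ * nh) -
      Real.sqrt (((2 - γ) * μ + (1 - γ * nh)) ^ 2 - 4 * (1 - γ) * (μ + 1) * μ)) /
    (2 * (μ + 1))

lemma rbar_facts {μ γ nh : ℝ} (hμ : 0 < μ) (hγ0 : 0 < γ) (hγ1 : γ < 1)
    (hnh0 : 0 ≤ nh) (hnh1 : nh < 1) :
    0 < rbar μ γ nh ∧ rbar μ γ nh < 1 - γ ∧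
      (μ + 1) * rbar μ γ nh ^ 2 - ((2 - γ) * μ + (1 - γ * nh)) * rbar μ γ nh
        + (1 - γ) * μ = 0 := by
  set B := (2 - γ) * μ + (1 - γ * nh) with hB
  set D := B ^ 2 - 4 * (1 - γ) * (μ + 1) * μ with hD
  have hBpos : 0 < B := by nlinarith
  have hDval : D = (2 * (μ + 1) * (1 - γ) - B) ^ 2 + 4 * (μ + 1) * (γ * (1 - γ) * (1 - nh)) := by
    rw [hD, hB]; ring
  have h1γ : (0:ℝ) < 1 - γ := by linarith
  have h1nh : (0:ℝ) < 1 - nh := by linarith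
  have hprod : 0 < 4 * (μ + 1) * (γ * (1 - γ) * (1 - nh)) :=
    mul_pos (by linarith) (mul_pos (mul_pos hγ0 h1γ) h1nh)
  have hDpos : 0 < D := by
    have := sq_nonneg (2 * (μ + 1) * (1 - γ) - B)
    linarith [hDval]
  have hDltB2 : D < B ^ 2 := by
    have h4 : 0 < 4 * (1 - γ) * (μ + 1) * μ :=
      mul_pos (mul_pos (mul_pos (by norm_num) h1γ) (by linarith)) hμ
    rw [hD]; linarith
  have hsq : Real.sqrt D ^ 2 = D := Real.sq_sqrt hDpos.le
  have hsqltB : Real.sqrt D < B := by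
    have := Real.sqrt_lt_sqrt hDpos.le hDltB2
    rwa [Real.sqrt_sq hBpos.le] at this
  have hsqgt : B - 2 * (μ + 1) * (1 - γ) < Real.sqrt D := by
    rcases le_or_gt (B - 2 * (μ + 1) * (1 - γ)) 0 with h | h
    · exact h.trans_lt (Real.sqrt_pos.mpr hDpos)
    · rw [show B - 2 * (μ + 1) * (1 - γ) = Real.sqrt ((B - 2 * (μ + 1) * (1 - γ)) ^ 2) from
        (Real.sqrt_sq h.le).symm]
      apply Real.sqrt_lt_sqrt (by positivity)
      have heq : (B - 2 * (μ + 1) * (1 - γ)) ^ 2 = (2 * (μ + 1) * (1 - γ) - B) ^ 2 := by ring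
      linarith [hDval, hprod]
  have h2A : (0:ℝ) < 2 * (μ + 1) := by linarith
  have hrbar : rbar μ γ nh = (B - Real.sqrt D) / (2 * (μ + 1)) := rfl
  refine ⟨?_, ?_, ?_⟩
  · rw [hrbar]; exact div_pos (by linarith) h2A
  · rw [hrbar, div_lt_iff₀ h2A]; linarith
  · rw [hrbar]
    have h2A' : (2 * (μ + 1)) ≠ 0 := h2A.ne'
    have e : (μ + 1) * ((B - √D) / (2 * (μ + 1))) ^ 2 - B * ((B - √D) / (2 * (μ + 1)))
        + (1 - γ) * μ = (√D ^ 2 - D) / (4 * (μ + 1)) := by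
      rw [eq_div_iff (by positivity), hD]; field_simp; ring
    rw [e, hsq, sub_self, zero_div]

/-- The equilibrium distribution of honest players: geometric with parameter `r̄`. -/
noncomputable def pbarh (μ γ nh : ℝ) (n : ℕ) : ℝ :=
  (1 - rbar μ γ nh) * rbar μ γ nh ^ n

/-- The equilibrium distribution of probabilistic cheaters: geometric with
parameter `r̄/(1−γ)`. -/
noncomputable def pbarc (μ γ nh : ℝ) (n : ℕ) : ℝ :=
  (1 - rbar μ γ nh / (1 - γ)) * (rbar μ γ nh / (1 - γ)) ^ n

/-- The generalized entropy functional `H[(f,g)]` (with the convention `0·log 0 = 0`,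
which is automatic since `Real.log 0 = 0`). -/
noncomputable def Hfun (γ nh : ℝ) (f g : ℕ → ℝ) : ℝ :=
  -(1 - nh) * (∑' n, f n * Real.log (f n)) - nh * (∑' n, g n * Real.log (g n)) -
    (1 - nh) * Real.log (1 - γ) * (∑' n : ℕ, (n : ℝ) * f n)

/-- the pair `(p̄^c, p̄^h)` maximizes the generalized entropy functional `H`
over all pairs of probability mass functions with the prescribed weighted mean `μ`. -/
theorem stmt_7 (μ γ nh : ℝ) (hμ : 0 < μ) (hγ : γ ∈ Set.Ioo (0 : ℝ) 1)
    (hnh : nh ∈ Set.Ico (0 : ℝ) 1)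
    (f g : ℕ → ℝ) (hf0 : ∀ n, 0 ≤ f n) (hg0 : ∀ n, 0 ≤ g n)
    (hf1 : (∑' n, f n) = 1) (hg1 : (∑' n, g n) = 1)
    (hfm : Summable (fun n : ℕ => (n : ℝ) * f n))
    (hgm : Summable (fun n : ℕ => (n : ℝ) * g n))
    (hfl : Summable (fun n : ℕ => f n * |Real.log (f n)|))
    (hgl : Summable (fun n : ℕ => g n * |Real.log (g n)|))
    (hmean : (1 - nh) * (∑' n : ℕ, (n : ℝ) * f n) + nh * (∑' n : ℕ, (n : ℝ) * g n) = μ) :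
    Hfun γ nh f g ≤ Hfun γ nh (pbarc μ γ nh) (pbarh μ γ nh) := by
  obtain ⟨hγ0, hγ1⟩ := hγ
  obtain ⟨hnh0, hnh1⟩ := hnh
  obtain ⟨hr0, hrγ, hquad⟩ := rbar_facts hμ hγ0 hγ1 hnh0 hnh1
  set r := rbar μ γ nh with hrdef
  have h1γ : (0:ℝ) < 1 - γ := by linarith
  have hr1 : r < 1 := by linarith
  set s := r / (1 - γ) with hsdef
  have hs0 : 0 < s := div_pos hr0 h1γ
  have hs1 : s < 1 := (div_lt_one h1γ).mpr (by linarith)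
  have h1s : (0:ℝ) < 1 - s := by linarith
  have h1r : (0:ℝ) < 1 - r := by linarith
  have hγr : (0:ℝ) < 1 - γ - r := by linarith
  -- identity for s/(1-s)
  have hsA : s / (1 - s) = r / (1 - γ - r) := by
    rw [hsdef]
    rw [show (1 : ℝ) - r / (1 - γ) = (1 - γ - r) / (1 - γ) by field_simp]
    rw [div_div_div_eq]
    field_simp
  -- mean identity
  have hmean2 : (1 - nh) * (s / (1 - s)) + nh * (r / (1 - r)) = μ := by
    rw [hsA]
    field_simp
    linear_combination -hquad
  -- log identity
  have hlogr : Real.log r = Real.log s + Real.log (1 - γ) := by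
    rw [show r = s * (1 - γ) by rw [hsdef]; field_simp]
    exact Real.log_mul hs0.ne' h1γ.ne'
  -- Gibbs inequalities
  have hGf := gibbs hs0 hs1 f hf0 hf1 hfm hfl
  have hGg := gibbs hr0 hr1 g hg0 hg1 hgm hgl
  -- values at the equilibrium pair
  have e1 : (∑' n, pbarc μ γ nh n * Real.log (pbarc μ γ nh n))
      = Real.log (1 - s) + (s / (1 - s)) * Real.log s := geo_ent hs0 hs1
  have e2 : (∑' n, pbarh μ γ nh n * Real.log (pbarh μ γ nh n))
      = Real.log (1 - r) + (r / (1 - r)) * Real.log r := geo_ent hr0 hr1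
  have e3 : (∑' n : ℕ, (n : ℝ) * pbarc μ γ nh n) = s / (1 - s) := geo_mean hs0.le hs1
  rw [Hfun, Hfun, e1, e2, e3]
  set Sf := ∑' n, f n * Real.log (f n) with hSf
  set Sg := ∑' n, g n * Real.log (g n) with hSg
  set Mf := ∑' n : ℕ, (n : ℝ) * f n with hMf
  set Mg := ∑' n : ℕ, (n : ℝ) * g n with hMg
  have h1 : (1 - nh) * (Real.log (1 - s) + Real.log s * Mf) ≤ (1 - nh) * Sf :=
    mul_le_mul_of_nonneg_left hGf (by linarith)
  have h2 : nh * (Real.log (1 - r) + Real.log r * Mg) ≤ nh * Sg :=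
    mul_le_mul_of_nonneg_left hGg hnh0
  have hEq : -(1 - nh) * (Real.log (1 - s) + Real.log s * Mf)
      - nh * (Real.log (1 - r) + Real.log r * Mg)
      - (1 - nh) * Real.log (1 - γ) * Mf
      = -(1 - nh) * (Real.log (1 - s) + s / (1 - s) * Real.log s)
        - nh * (Real.log (1 - r) + r / (1 - r) * Real.log r)
        - (1 - nh) * Real.log (1 - γ) * (s / (1 - s)) := by
    linear_combination (-(Real.log r)) * hmean + (Real.log r) * hmean2 +
      ((1 - nh) * (Mf - s / (1 - s))) * hlogr
  linarith
end

section
/- Let μ > 0, γ ∈ (0,1), n_h ∈ (0,1), n_c = 1 − n_h, and let r̄, p̄^h, p̄^c be as defined; set p̄_n = n_c·p̄^c_n + n_h·p̄^h_n and let F̄_n = Σ_{k≤n} p̄_k be the cumulative distribution function of p̄. Then 1 − F̄_n = n_c·(r̄/(1−γ))^{n+1} + n_h·r̄^{n+1} for every n ∈ ℕ, and Σ_{n≥0} (1 − F̄_n)² = n_c²·r̄²/((1−γ)² − r̄²) + n_h²·r̄²/(1 − r̄²) + 2·n_c·n_h·r̄²/(1−γ − r̄²). -/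
/-- The equilibrium wealth distribution of the whole population: the mixture
`p̄ = n_c·p̄^c + n_h·p̄^h`. -/
noncomputable def pbar (μ γ nh : ℝ) (n : ℕ) : ℝ :=
  (1 - nh) * pbarc μ γ nh n + nh * pbarh μ γ nh n

/-- The cumulative distribution function `F̄_n = Σ_{k ≤ n} p̄_k` of the mixture `p̄`. -/
noncomputable def Fbar (μ γ nh : ℝ) (n : ℕ) : ℝ :=
  ∑ k ∈ Finset.range (n + 1), pbar μ γ nh k

lemma rbar_bounds (μ γ nh : ℝ) (hμ : 0 < μ) (hγ : γ ∈ Set.Ioo (0 : ℝ) 1)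
    (hnh : nh ∈ Set.Ioo (0 : ℝ) 1) :
    0 < rbar μ γ nh ∧ rbar μ γ nh < 1 - γ := by
  obtain ⟨hγ0, hγ1⟩ := hγ
  obtain ⟨hn0, hn1⟩ := hnh
  set s : ℝ := (2 - γ) * μ + (1 - γ * nh) with hs_def
  set D : ℝ := s ^ 2 - 4 * (1 - γ) * (μ + 1) * μ with hD_def
  have hs : 0 < s := by nlinarith
  have hDlt : D < s ^ 2 := by
    rw [hD_def]
    nlinarith [mul_pos (show (0:ℝ) < 1 - γ by linarith)
      (mul_pos (show (0:ℝ) < μ + 1 by linarith) hμ)]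
  have hDgt : (s - 2 * (μ + 1) * (1 - γ)) ^ 2 < D := by
    rw [hD_def, hs_def]
    nlinarith [mul_pos (mul_pos (mul_pos (show (0:ℝ) < μ + 1 by linarith)
      (show (0:ℝ) < 1 - γ by linarith)) hγ0) (show (0:ℝ) < 1 - nh by linarith)]
  have hD0 : 0 < D := lt_of_le_of_lt (sq_nonneg _) hDgt
  have hsq_lt : Real.sqrt D < s := by
    rw [show s = Real.sqrt (s ^ 2) by rw [Real.sqrt_sq hs.le]]
    exact Real.sqrt_lt_sqrt hD0.le hDlt
  have h2 : s - 2 * (μ + 1) * (1 - γ) < Real.sqrt D := by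
    have := Real.sqrt_lt_sqrt (sq_nonneg (s - 2 * (μ + 1) * (1 - γ))) hDgt
    rw [Real.sqrt_sq_eq_abs] at this
    exact lt_of_le_of_lt (le_abs_self _) this
  have hden : (0:ℝ) < 2 * (μ + 1) := by linarith
  constructor
  · apply div_pos _ hden; linarith
  · rw [rbar, ← hs_def, ← hD_def, div_lt_iff₀ hden]; linarith

lemma geo_sum_s18 (x : ℝ) (n : ℕ) :
    ∑ k ∈ Finset.range (n + 1), (1 - x) * x ^ k = 1 - x ^ (n + 1) := by
  induction n with
  | zero => simp
  | succ m ih => rw [Finset.sum_range_succ, ih]; ring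

set_option maxHeartbeats 1000000 in
/-- tail formula for the CDF of the equilibrium mixture and the value of
`Σ_n (1 − F̄_n)²`. -/
theorem stmt_18 (μ γ nh : ℝ) (hμ : 0 < μ) (hγ : γ ∈ Set.Ioo (0 : ℝ) 1)
    (hnh : nh ∈ Set.Ioo (0 : ℝ) 1) :
    (∀ n : ℕ, 1 - Fbar μ γ nh n =
        (1 - nh) * (rbar μ γ nh / (1 - γ)) ^ (n + 1) + nh * rbar μ γ nh ^ (n + 1)) ∧
      (∑' n : ℕ, (1 - Fbar μ γ nh n) ^ 2) =
        (1 - nh) ^ 2 * rbar μ γ nh ^ 2 / ((1 - γ) ^ 2 - rbar μ γ nh ^ 2) +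
          nh ^ 2 * rbar μ γ nh ^ 2 / (1 - rbar μ γ nh ^ 2) +
          2 * (1 - nh) * nh * rbar μ γ nh ^ 2 / (1 - γ - rbar μ γ nh ^ 2) := by
  obtain ⟨hq0, hq1⟩ := rbar_bounds μ γ nh hμ hγ hnh
  obtain ⟨hγ0, hγ1⟩ := hγ
  set q : ℝ := rbar μ γ nh with hq_def
  set ρ : ℝ := q / (1 - γ) with hρ_def
  have hγne : (1 - γ) ≠ 0 := by linarith
  have hρ0 : 0 < ρ := div_pos hq0 (by linarith)
  have hρ1 : ρ < 1 := by rw [hρ_def, div_lt_one (by linarith)]; linarith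
  have hq1' : q < 1 := by linarith
  have h1 : ∀ n : ℕ, 1 - Fbar μ γ nh n = (1 - nh) * ρ ^ (n + 1) + nh * q ^ (n + 1) := by
    intro n
    have hF : Fbar μ γ nh n =
        (1 - nh) * ∑ k ∈ Finset.range (n + 1), (1 - ρ) * ρ ^ k +
          nh * ∑ k ∈ Finset.range (n + 1), (1 - q) * q ^ k := by
      rw [Fbar, Finset.mul_sum, Finset.mul_sum, ← Finset.sum_add_distrib]
      refine Finset.sum_congr rfl fun k _ => ?_
      rw [pbar, pbarc, pbarh]
    rw [hF, geo_sum_s18, geo_sum_s18]; ring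
  refine ⟨h1, ?_⟩
  have hfun : ∀ n : ℕ, (1 - Fbar μ γ nh n) ^ 2 =
      (1 - nh) ^ 2 * ρ ^ 2 * (ρ ^ 2) ^ n + nh ^ 2 * q ^ 2 * (q ^ 2) ^ n +
        2 * (1 - nh) * nh * (ρ * q) * (ρ * q) ^ n := by
    intro n; rw [h1 n]; ring
  have hρ2 : |ρ ^ 2| < 1 := by
    rw [abs_of_nonneg (sq_nonneg _)]; nlinarith
  have hq2 : |q ^ 2| < 1 := by
    rw [abs_of_nonneg (sq_nonneg _)]; nlinarith
  have hρq : |ρ * q| < 1 := by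
    rw [abs_of_nonneg (by positivity)]; nlinarith
  have s1 : Summable fun n : ℕ => (1 - nh) ^ 2 * ρ ^ 2 * (ρ ^ 2) ^ n :=
    (summable_geometric_of_abs_lt_one hρ2).mul_left _
  have s2 : Summable fun n : ℕ => nh ^ 2 * q ^ 2 * (q ^ 2) ^ n :=
    (summable_geometric_of_abs_lt_one hq2).mul_left _
  have s3 : Summable fun n : ℕ => 2 * (1 - nh) * nh * (ρ * q) * (ρ * q) ^ n :=
    (summable_geometric_of_abs_lt_one hρq).mul_left _
  rw [tsum_congr hfun, Summable.tsum_add (s1.add s2) s3, Summable.tsum_add s1 s2,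
    tsum_mul_left, tsum_mul_left, tsum_mul_left,
    tsum_geometric_of_abs_lt_one hρ2, tsum_geometric_of_abs_lt_one hq2,
    tsum_geometric_of_abs_lt_one hρq]
  have hd2 : (1 : ℝ) - q ^ 2 ≠ 0 := by nlinarith
  have hd4 : (1 - γ) ^ 2 - q ^ 2 ≠ 0 := by nlinarith
  have hd5 : 1 - γ - q ^ 2 ≠ 0 := by nlinarith
  have h1ρ2 : 1 - ρ ^ 2 = ((1 - γ) ^ 2 - q ^ 2) / (1 - γ) ^ 2 := by
    rw [hρ_def]; field_simp
  have h1ρq : 1 - ρ * q = (1 - γ - q ^ 2) / (1 - γ) := by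
    rw [hρ_def]; field_simp
  have e1 : (1 - nh) ^ 2 * ρ ^ 2 * (1 - ρ ^ 2)⁻¹ =
      (1 - nh) ^ 2 * q ^ 2 / ((1 - γ) ^ 2 - q ^ 2) := by
    rw [h1ρ2, inv_div, hρ_def, div_pow]
    field_simp
  have e2 : nh ^ 2 * q ^ 2 * (1 - q ^ 2)⁻¹ = nh ^ 2 * q ^ 2 / (1 - q ^ 2) :=
    (div_eq_mul_inv _ _).symm
  have e3 : 2 * (1 - nh) * nh * (ρ * q) * (1 - ρ * q)⁻¹ =
      2 * (1 - nh) * nh * q ^ 2 / (1 - γ - q ^ 2) := by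
    rw [h1ρq, inv_div, hρ_def]
    field_simp
  rw [e1, e2, e3]
end
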